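/- Let 0 < m < 1, ε > 0 and δ > 0. Then there exists a wavenumber k > 0 such that the linear-stability matrix A_δ(k) has a real eigenvalue σ > 0. That is, when the dimensionless scent-decay rate satisfies m < 1, the uniform steady state of the nonlocal territorial model is linearly unstable to perturbations at some wavenumbers. -/

import Mathlib

/-!
`A_δ(k)` commutes with the swap `(u, v, p, q) ↦ (v, u, q, p)`, so its spectrum is that of its
restrictions to symmetric perturbations `(u, u, p, p)` and antisymmetric ones `(u, -u, p, -p)`.
Writing `x = δk`, the antisymmetric block has determinant a positive multiple of
`(2 + m)(1 + m)x - 2(1 + 2m) sin x`. Since `sin x / x → 1` and `(2 + m)(1 + m) < 2(1 + 2m)`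
exactly when `m < 1`, this is negative for small `x > 0`, and a real `2 × 2` matrix with negative
determinant has a positive eigenvalue.
-/

/-- The nonlocal linear-stability matrix `A_δ(k)` for parameters `m, ε, δ` and
wavenumber `k`: `A_δ(k) = [[a,0,0,c],[0,a,c,0],[d,0,−b,0],[0,d,0,−b]]` with
`a = (1/(1+m)² − 1)k²`, `b = (1+m)/ε`, `c = −2(2 − 1/(1+m))·(k/δ)·sin(δk)`,
`d = m/(ε(1+m))`. -/
noncomputable def Adelta (m ε δ k : ℝ) : Matrix (Fin 4) (Fin 4) ℝ :=
  !![(1 / (1 + m) ^ 2 - 1) * k ^ 2, 0, 0,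
       -2 * (2 - 1 / (1 + m)) * (k / δ) * Real.sin (δ * k);
     0, (1 / (1 + m) ^ 2 - 1) * k ^ 2,
       -2 * (2 - 1 / (1 + m)) * (k / δ) * Real.sin (δ * k), 0;
     m / (ε * (1 + m)), 0, -((1 + m) / ε), 0;
     0, m / (ε * (1 + m)), 0, -((1 + m) / ε)]

open Real Filter Topology

lemma exists_pos_mul_lt_sin {ρ : ℝ} (hρ : ρ < 1) : ∃ x, 0 < x ∧ ρ * x < sin x := by
  have hnear : ∀ᶠ x in 𝓝 0, ρ < sinc x :=
    continuous_sinc.continuousAt.eventually (lt_mem_nhds (by rwa [sinc_zero]))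
  obtain ⟨x, hsinc, hx⟩ :=
    ((hnear.filter_mono nhdsWithin_le_nhds).and (self_mem_nhdsWithin (s := Set.Ioi 0))).exists
  refine ⟨x, hx, ?_⟩
  rwa [sinc_of_ne_zero hx.ne', lt_div_iff₀ hx] at hsinc

namespace Matrix

variable {R : Type*} [CommRing R]

theorem det_sub_smul_one_fin_two (A : Matrix (Fin 2) (Fin 2) R) (σ : R) :
    (A - σ • 1).det = σ ^ 2 - A.trace * σ + A.det := by
  simp only [det_fin_two, trace_fin_two, sub_apply, smul_apply, smul_eq_mul, one_apply_eq,
    one_apply_ne zero_ne_one, one_apply_ne one_ne_zero]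
  ring

theorem exists_pos_det_sub_smul_one_eq_zero_of_det_neg {A : Matrix (Fin 2) (Fin 2) ℝ}
    (hA : A.det < 0) : ∃ σ : ℝ, 0 < σ ∧ (A - σ • 1).det = 0 := by
  set D := A.trace ^ 2 - 4 * A.det
  have hD : 0 ≤ D := by nlinarith [sq_nonneg A.trace]
  refine ⟨(A.trace + √D) / 2, ?_, ?_⟩
  · nlinarith [sq_sqrt hD, sqrt_nonneg D]
  · rw [det_sub_smul_one_fin_two]
    linear_combination sq_sqrt hD / 4

theorem det_swapBlock_sub_smul_one (p q c d σ : R) :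
    (!![p, 0, 0, c; 0, p, c, 0; d, 0, q, 0; 0, d, 0, q] - σ • 1 : Matrix (Fin 4) (Fin 4) R).det =
      (!![p, c; d, q] - σ • 1 : Matrix (Fin 2) (Fin 2) R).det *
        (!![p, -c; d, q] - σ • 1 : Matrix (Fin 2) (Fin 2) R).det := by
  simp [det_succ_row_zero, Fin.sum_univ_succ, Fin.succAbove_of_le_castSucc,
    Fin.succAbove_of_castSucc_lt, one_apply]
  ring

end Matrix

noncomputable def AdeltaSymm (m ε δ k : ℝ) : Matrix (Fin 2) (Fin 2) ℝ :=
  !![(1 / (1 + m) ^ 2 - 1) * k ^ 2, -2 * (2 - 1 / (1 + m)) * (k / δ) * sin (δ * k);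
     m / (ε * (1 + m)), -((1 + m) / ε)]

noncomputable def AdeltaAntisymm (m ε δ k : ℝ) : Matrix (Fin 2) (Fin 2) ℝ :=
  !![(1 / (1 + m) ^ 2 - 1) * k ^ 2, 2 * (2 - 1 / (1 + m)) * (k / δ) * sin (δ * k);
     m / (ε * (1 + m)), -((1 + m) / ε)]

theorem det_Adelta_sub_smul_one (m ε δ k σ : ℝ) :
    (Adelta m ε δ k - σ • 1).det =
      (AdeltaSymm m ε δ k - σ • 1).det * (AdeltaAntisymm m ε δ k - σ • 1).det := by
  rw [Adelta, Matrix.det_swapBlock_sub_smul_one, AdeltaSymm, AdeltaAntisymm]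
  congr 4
  simp only [neg_mul, neg_neg]

theorem det_AdeltaAntisymm {m ε δ : ℝ} (hm : 1 + m ≠ 0) (hε : ε ≠ 0) (hδ : δ ≠ 0) (k : ℝ) :
    (AdeltaAntisymm m ε δ k).det = m * (δ * k) / (ε * (1 + m) ^ 2 * δ ^ 2) *
      ((2 + m) * (1 + m) * (δ * k) - 2 * (1 + 2 * m) * sin (δ * k)) := by
  rw [AdeltaAntisymm, Matrix.det_fin_two_of]
  field_simp
  ring

/-- For `0 < m < 1`, `ε > 0` and `δ > 0`, there is a wavenumber
`k > 0` at which the nonlocal linear-stability matrix `A_δ(k)` has a real eigenvalue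
`σ > 0`: the uniform steady state is linearly unstable at some wavenumbers. -/
theorem nonlocal_instability_exists
    (m ε δ : ℝ) (hm0 : 0 < m) (hm1 : m < 1) (hε : 0 < ε) (hδ : 0 < δ) :
    ∃ k : ℝ, 0 < k ∧ ∃ σ : ℝ, 0 < σ ∧
      (Adelta m ε δ k - σ • (1 : Matrix (Fin 4) (Fin 4) ℝ)).det = 0 := by
  have hρ : (2 + m) * (1 + m) / (2 * (1 + 2 * m)) < 1 := by
    rw [div_lt_one (by positivity)]
    nlinarith
  obtain ⟨x, hx, hsin⟩ := exists_pos_mul_lt_sin hρ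
  have hsin' : (2 + m) * (1 + m) * x < 2 * (1 + 2 * m) * sin x := by
    rwa [div_mul_eq_mul_div, div_lt_iff₀ (by positivity), mul_comm (sin x)] at hsin
  have hdet : (AdeltaAntisymm m ε δ (x / δ)).det < 0 := by
    rw [det_AdeltaAntisymm (by positivity) hε.ne' hδ.ne', mul_div_cancel₀ x hδ.ne']
    exact mul_neg_of_pos_of_neg (by positivity) (by linarith)
  obtain ⟨σ, hσ, hσdet⟩ := Matrix.exists_pos_det_sub_smul_one_eq_zero_of_det_neg hdet
  exact ⟨x / δ, div_pos hx hδ, σ, hσ, by rw [det_Adelta_sub_smul_one, hσdet, mul_zero]⟩
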